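/- arXiv:2210.08136 — 3 statements merged into one kernel-verified Lean document; each statement's English description precedes it below -/
import Mathlib

section
/- Let Video be a type and call a finite list of videos a persona. Let O be an obfuscator, i.e., a function assigning to each persona P a probability mass function O(P) on personas. Assume (i) O never deletes videos: for every persona P and every persona Q in the support of O(P), every video occurring in P also occurs in Q; and (ii) O only injects videos from a fixed obfuscation set 𝒪 of videos: for every persona P and every persona Q in the support of O(P), every video occurring in Q either occurs in P or belongs to 𝒪. Let P₁ and P₂ be personas and v a video with v occurring in P₂, v not occurring in P₁, and v ∉ 𝒪. Then for the set A = {Q : v does not occur in Q} of personas, the probability that a sample of O(P₁) lies in A equals 1 and the probability that a sample of O(P₂) lies in A equals 0; consequently, for every real ε, Pr[O(P₁) ∈ A] > exp(ε) · Pr[O(P₂) ∈ A], so O does not satisfy ε-differential privacy for any ε. -/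
/-! An injected video comes from `𝒪`, so a video outside `P₁ ∪ 𝒪` is almost surely absent from
`O(P₁)`; since nothing is deleted, a video of `P₂` is almost surely present in `O(P₂)`. The event
"`v` does not occur" thus has probability one under `O(P₁)` and zero under `O(P₂)`, and no factor
`exp ε` can bridge `1` and `0`. -/

section Obfuscator

variable {Video : Type*} (O : List Video → PMF (List Video)) {P : List Video} {v : Video}

theorem toOuterMeasure_setOf_notMem_eq_one_of_noInject (𝒪 : Set Video)
    (hInject : ∀ Q, Q ∈ (O P).support → ∀ w : Video, w ∈ Q → w ∈ P ∨ w ∈ 𝒪)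
    (hvP : v ∉ P) (hv𝒪 : v ∉ 𝒪) :
    (O P).toOuterMeasure {Q : List Video | v ∉ Q} = 1 :=
  (PMF.toOuterMeasure_apply_eq_one_iff _ _).2
    fun Q hQ hvQ => (hInject Q hQ v hvQ).elim hvP hv𝒪

theorem toOuterMeasure_setOf_notMem_eq_zero_of_noDelete
    (hNoDelete : ∀ Q, Q ∈ (O P).support → ∀ w : Video, w ∈ P → w ∈ Q) (hvP : v ∈ P) :
    (O P).toOuterMeasure {Q : List Video | v ∉ Q} = 0 :=
  (PMF.toOuterMeasure_apply_eq_zero_iff _ _).2 <|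
    Set.disjoint_right.2 fun Q hvQ hQ => hvQ (hNoDelete Q hQ v hvP)

end Obfuscator

/-- An obfuscator that never deletes videos and only injects
videos from a fixed obfuscation set cannot satisfy ε-differential privacy
for any ε. -/
theorem obfuscator_not_eps_DP {Video : Type*}
    (O : List Video → PMF (List Video)) (𝒪 : Set Video)
    (hNoDelete : ∀ P Q, Q ∈ (O P).support → ∀ w : Video, w ∈ P → w ∈ Q)
    (hInject : ∀ P Q, Q ∈ (O P).support → ∀ w : Video, w ∈ Q → w ∈ P ∨ w ∈ 𝒪)
    (P₁ P₂ : List Video) (v : Video)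
    (hv₂ : v ∈ P₂) (hv₁ : v ∉ P₁) (hv𝒪 : v ∉ 𝒪) :
    (O P₁).toOuterMeasure {Q : List Video | v ∉ Q} = 1 ∧
    (O P₂).toOuterMeasure {Q : List Video | v ∉ Q} = 0 ∧
    ∀ ε : ℝ,
      ENNReal.ofReal (Real.exp ε) * (O P₂).toOuterMeasure {Q : List Video | v ∉ Q}
        < (O P₁).toOuterMeasure {Q : List Video | v ∉ Q} := by
  have h₁ := toOuterMeasure_setOf_notMem_eq_one_of_noInject O 𝒪 (hInject P₁) hv₁ hv𝒪
  have h₂ := toOuterMeasure_setOf_notMem_eq_zero_of_noDelete O (hNoDelete P₂) hv₂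
  refine ⟨h₁, h₂, fun ε => ?_⟩
  rw [h₁, h₂, mul_zero]
  exact zero_lt_one
end

section
/- Let Video be a type and call a finite list of videos a persona. Let O be an obfuscator, i.e., a function assigning to each persona P a probability mass function O(P) on personas. Assume (i) O never deletes videos: for every persona P and every persona Q in the support of O(P), every video occurring in P also occurs in Q; and (ii) O only injects videos from a fixed obfuscation set 𝒪 of videos: for every persona P and every persona Q in the support of O(P), every video occurring in Q either occurs in P or belongs to 𝒪. Let P₁ and P₂ be personas and v a video with v occurring in P₂, v not occurring in P₁, and v ∉ 𝒪. Then for every real ε ≥ 0, any δ ≥ 0 such that for all sets A of personas Pr[O(P₁) ∈ A] ≤ exp(ε) · Pr[O(P₂) ∈ A] + δ must satisfy δ ≥ 1; in particular, O does not satisfy (ε,δ)-differential privacy for any ε ≥ 0 and any δ < 1. -/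
/-! The event "`v` does not occur" has probability one under `O P₁`, since `v` is neither in `P₁`
nor injectable, and probability zero under `O P₂`, since `v` is never deleted; at this event the
privacy inequality reads `1 ≤ exp ε * 0 + δ`. -/

namespace PMF

variable {α : Type*} {p q : PMF α} {A : Set α}

theorem one_le_of_toOuterMeasure_le_mul_add_ofReal (hp : p.support ⊆ A)
    (hq : Disjoint q.support A) {c : ENNReal} {δ : ℝ}
    (h : p.toOuterMeasure A ≤ c * q.toOuterMeasure A + ENNReal.ofReal δ) : 1 ≤ δ := by
  rw [(toOuterMeasure_apply_eq_one_iff p A).mpr hp,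
    (toOuterMeasure_apply_eq_zero_iff q A).mpr hq, mul_zero, zero_add] at h
  exact ENNReal.one_le_ofReal.mp h

end PMF

/-- An obfuscator that never deletes videos and only injects
videos from a fixed obfuscation set cannot satisfy (ε,δ)-differential privacy
for any ε ≥ 0 and δ < 1: any valid δ ≥ 0 must satisfy δ ≥ 1. -/
theorem obfuscator_not_eps_delta_DP {Video : Type*}
    (O : List Video → PMF (List Video)) (𝒪 : Set Video)
    (hNoDelete : ∀ P Q, Q ∈ (O P).support → ∀ w : Video, w ∈ P → w ∈ Q)
    (hInject : ∀ P Q, Q ∈ (O P).support → ∀ w : Video, w ∈ Q → w ∈ P ∨ w ∈ 𝒪)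
    (P₁ P₂ : List Video) (v : Video)
    (hv₂ : v ∈ P₂) (hv₁ : v ∉ P₁) (hv𝒪 : v ∉ 𝒪) :
    ∀ ε δ : ℝ, 0 ≤ ε → 0 ≤ δ →
      (∀ A : Set (List Video),
        (O P₁).toOuterMeasure A ≤
          ENNReal.ofReal (Real.exp ε) * (O P₂).toOuterMeasure A
            + ENNReal.ofReal δ) →
      1 ≤ δ := by
  intro ε δ _ _ hDP
  have hAbsent : (O P₁).support ⊆ {Q | v ∉ Q} := fun Q hQ hvQ ↦
    (hInject P₁ Q hQ v hvQ).elim hv₁ hv𝒪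
  have hPresent : Disjoint (O P₂).support {Q | v ∉ Q} :=
    Set.disjoint_left.mpr fun Q hQ ↦ not_not_intro (hNoDelete P₂ Q hQ v hv₂)
  exact PMF.one_le_of_toOuterMeasure_le_mul_add_ofReal hAbsent hPresent (hDP {Q | v ∉ Q})
end

section
/- Let Video and Category be types, call a finite list of videos a persona, and call a finite set of categories a user profile. Let O be an obfuscator, i.e., a function assigning to each persona P a probability mass function O(P) on personas, and let R be a function mapping each persona to a user profile. Let P₁ and P₂ be personas and I a category such that: for every persona Q in the support of O(P₂), I ∈ R(Q), and for every persona Q in the support of O(P₁), I ∉ R(Q). Then for every real ε ≥ 0, any δ ≥ 0 such that for all sets 𝒜 of user profiles Pr[R(O(P₁)) ∈ 𝒜] ≤ exp(ε) · Pr[R(O(P₂)) ∈ 𝒜] + δ must satisfy δ ≥ 1; in particular, the composed mechanism P ↦ R(O(P)) does not satisfy (ε,δ)-differential privacy for any ε ≥ 0 and any δ < 1. -/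
open scoped ENNReal

theorem PMF.one_le_of_toOuterMeasure_le_mul_add_ofReal_s3 {α : Type*} (p q : PMF α) (s : Set α)
    (hp : ∀ a ∈ p.support, a ∈ s) (hq : ∀ a ∈ q.support, a ∉ s) {c : ℝ≥0∞} {δ : ℝ}
    (h : p.toOuterMeasure s ≤ c * q.toOuterMeasure s + ENNReal.ofReal δ) : 1 ≤ δ := by
  have hp_one : p.toOuterMeasure s = 1 := (p.toOuterMeasure_apply_eq_one_iff s).mpr hp
  have hq_zero : q.toOuterMeasure s = 0 :=
    (q.toOuterMeasure_apply_eq_zero_iff s).mpr (Set.disjoint_left.mpr hq)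
  rw [hp_one, hq_zero, mul_zero, zero_add] at h
  exact ENNReal.one_le_ofReal.mp h

/-- If every persona in the support of O(P₂) is mapped by the
user-profile map R to a profile containing interest category I, while no
persona in the support of O(P₁) is, then the composed mechanism R ∘ O cannot
satisfy (ε,δ)-differential privacy for any ε ≥ 0 and δ < 1: any valid δ ≥ 0
must satisfy δ ≥ 1. -/
theorem composed_mechanism_not_eps_delta_DP {Video Category : Type*}
    (O : List Video → PMF (List Video))
    (R : List Video → Finset Category)
    (P₁ P₂ : List Video) (I : Category)
    (h₂ : ∀ Q, Q ∈ (O P₂).support → I ∈ R Q)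
    (h₁ : ∀ Q, Q ∈ (O P₁).support → I ∉ R Q) :
    ∀ ε δ : ℝ, 0 ≤ ε → 0 ≤ δ →
      (∀ 𝒜 : Set (Finset Category),
        (O P₁).toOuterMeasure {Q : List Video | R Q ∈ 𝒜} ≤
          ENNReal.ofReal (Real.exp ε) *
              (O P₂).toOuterMeasure {Q : List Video | R Q ∈ 𝒜}
            + ENNReal.ofReal δ) →
      1 ≤ δ := by
  intro ε δ _ _ hDP
  exact (O P₁).one_le_of_toOuterMeasure_le_mul_add_ofReal_s3 (O P₂) {Q | I ∉ R Q} h₁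
    (fun Q hQ hI => hI (h₂ Q hQ)) (hDP {S | I ∉ S})
end
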